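/- In Yoshida's combinator calculus, reduction preserves the polarity annotations of names: with annotations m(a⁺,v±), d(a⁻,b⁺,c⁺), k(a⁻), fw(a⁻,b⁺), b_l(a⁻,b⁺), b_r(a⁻,b⁻), s(a⁻,b⁻,c⁺), each rewrite rule produces a term whose annotated polarities are consistent with the redex; in particular d(a⁻,b⁺,c⁺)|m(a⁺,v) → m(b⁺,v)|m(b⁺,v) preserves polarities. -/

import Mathlib

/-- Yoshida's combinator calculus over names drawn from `ℕ`. -/
inductive Y : Type
  | zero : Y
  | msg (a b : ℕ) : Y
  | d (a b c : ℕ) : Y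
  | k (a : ℕ) : Y
  | fw (a b : ℕ) : Y
  | br (a b : ℕ) : Y
  | bl (a b : ℕ) : Y
  | s (a b c : ℕ) : Y
  | nu (a : ℕ) (P : Y) : Y
  | par (P Q : Y) : Y
  | repl (P : Y) : Y

open Y

/-- Polarities: `pos` (+, output use) and `neg` (−, input use). -/
inductive Pol : Type
  | pos
  | neg
deriving DecidableEq

open Pol

/-- The polarity annotations of the (free) name occurrences of a process, following
`m(a⁺,v±), d(a⁻,b⁺,c⁺), k(a⁻), fw(a⁻,b⁺), b_l(a⁻,b⁺), b_r(a⁻,b⁻), s(a⁻,b⁻,c⁺)`;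
a message payload `v±` carries both polarities. -/
def pols : Y → Set (ℕ × Pol)
  | .zero => ∅
  | .msg a v => {(a, pos), (v, pos), (v, neg)}
  | .d a b c => {(a, neg), (b, pos), (c, pos)}
  | .k a => {(a, neg)}
  | .fw a b => {(a, neg), (b, pos)}
  | .bl a b => {(a, neg), (b, pos)}
  | .br a b => {(a, neg), (b, neg)}
  | .s a b c => {(a, neg), (b, neg), (c, pos)}
  | .nu _ P => pols P
  | .par P Q => pols P ∪ pols Q
  | .repl P => pols P

/-- Each of the six communication rewrite rules preserves the polarity annotations:
the polarities of the surviving names in the contractum are among those of the redex. -/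
theorem reduction_preserves_polarities (a b c v : ℕ) :
    pols (par (msg b v) (msg c v)) ⊆ pols (par (d a b c) (msg a v)) ∧
    pols (zero : Y) ⊆ pols (par (k a) (msg a v)) ∧
    pols (msg b v) ⊆ pols (par (fw a b) (msg a v)) ∧
    pols (fw b v) ⊆ pols (par (br a b) (msg a v)) ∧
    pols (fw v b) ⊆ pols (par (bl a b) (msg a v)) ∧
    pols (fw b c) ⊆ pols (par (s a b c) (msg a v)) := by
  -- Each name occurrence of a contractum is either the payload `v`, which the message carries
  -- with both polarities, or has the same polarity in the consumed combinator.
  simp [pols, Set.insert_subset_iff]
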